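/- arXiv:math/0510220 — 2 statements merged into one kernel-verified Lean document; each statement's English description precedes it below -/
import Mathlib

section
/- Let G be a group, d ≥ 0, and define N_k = [G^(d), G, ..., G] (the left-normed commutator of G^(d) with k − 2^d copies of G) for k ≥ 2^d, where G^(d) denotes the d-th term of the derived series and G^(d) ≤ γ_{2^d}(G). Then [N_j, N_k] ≤ N_{j+k} for all j, k ≥ 2^d. -/
/-!
The three subgroups lemma, applied modulo the normal subgroups `N k`, gives by induction on `m`
that `⁅N j, γ_{m+1}⁆ ≤ N_{j+m+1}` whenever `N` is obtained from `N j` by repeatedly commutating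
with `G`. The same induction applied to `N = γ` gives `⁅γ_a, γ_b⁆ ≤ γ_{a+b}`, hence
`G^(d) ≤ γ_{2^d}`, and therefore `N k ≤ γ_k`. Combining the two, `⁅N j, N k⁆ ≤ ⁅N j, γ_k⁆ ≤ N_{j+k}`.

Mathlib indexes the lower central series from `0`: `(⊤ : Subgroup G).lowerCentralSeries n = γ_{n+1}`.
-/

namespace Subgroup

variable {G : Type*} [Group G]

theorem commutator_commutator_le_of_rotate {H₁ H₂ H₃ K : Subgroup G} [K.Normal]
    (h1 : ⁅⁅H₂, H₃⁆, H₁⁆ ≤ K) (h2 : ⁅⁅H₃, H₁⁆, H₂⁆ ≤ K) : ⁅⁅H₁, H₂⁆, H₃⁆ ≤ K := by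
  rw [← QuotientGroup.ker_mk' K, ← map_eq_bot_iff] at h1 h2 ⊢
  simp only [map_commutator] at h1 h2 ⊢
  exact commutator_commutator_eq_bot_of_rotate h1 h2

theorem normal_of_succ_eq_commutator_top {N : ℕ → Subgroup G} {n₀ : ℕ} [(N n₀).Normal]
    (hN : ∀ k, n₀ ≤ k → N (k + 1) = ⁅N k, ⊤⁆) : ∀ k, n₀ ≤ k → (N k).Normal := by
  intro k hk
  induction k, hk using Nat.le_induction with
  | base => infer_instance
  | succ k hk ih => rw [hN k hk]; infer_instance

theorem commutator_lowerCentralSeries_le_of_succ_eq_commutator_top {N : ℕ → Subgroup G} {n₀ : ℕ}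
    [(N n₀).Normal] (hN : ∀ k, n₀ ≤ k → N (k + 1) = ⁅N k, ⊤⁆) :
    ∀ m j, n₀ ≤ j → ⁅N j, (⊤ : Subgroup G).lowerCentralSeries m⁆ ≤ N (j + m + 1) := by
  intro m
  induction m with
  | zero => intro j hj; rw [lowerCentralSeries_zero, hN j hj]
  | succ m ih =>
    intro j hj
    have := normal_of_succ_eq_commutator_top hN (j + m + 2) (by omega)
    rw [lowerCentralSeries_succ, commutator_comm]
    apply commutator_commutator_le_of_rotate
    · calc ⁅⁅⊤, N j⁆, (⊤ : Subgroup G).lowerCentralSeries m⁆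
          = ⁅N (j + 1), (⊤ : Subgroup G).lowerCentralSeries m⁆ := by rw [commutator_comm ⊤ (N j), hN j hj]
        _ ≤ N (j + 1 + m + 1) := ih (j + 1) (by omega)
        _ = N (j + m + 2) := by ring_nf
    · calc ⁅⁅N j, (⊤ : Subgroup G).lowerCentralSeries m⁆, ⊤⁆ ≤ ⁅N (j + m + 1), ⊤⁆ :=
            commutator_mono (ih j hj) le_rfl
        _ = N (j + m + 2) := (hN (j + m + 1) (by omega)).symm

theorem commutator_lowerCentralSeries_le (a b : ℕ) :
    ⁅(⊤ : Subgroup G).lowerCentralSeries a, (⊤ : Subgroup G).lowerCentralSeries b⁆ ≤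
      (⊤ : Subgroup G).lowerCentralSeries (a + b + 1) :=
  have : ((⊤ : Subgroup G).lowerCentralSeries 0).Normal := by
    rw [lowerCentralSeries_zero]; infer_instance
  commutator_lowerCentralSeries_le_of_succ_eq_commutator_top (fun _ _ ↦ rfl) b a (Nat.zero_le a)

theorem derivedSeries_le_lowerCentralSeries_two_pow_sub_one (d : ℕ) :
    derivedSeries G d ≤ (⊤ : Subgroup G).lowerCentralSeries (2 ^ d - 1) := by
  induction d with
  | zero => simp
  | succ d ih =>
    calc derivedSeries G (d + 1) = ⁅derivedSeries G d, derivedSeries G d⁆ := derivedSeries_succ G d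
      _ ≤ (⊤ : Subgroup G).lowerCentralSeries (2 ^ d - 1 + (2 ^ d - 1) + 1) :=
          (commutator_mono ih ih).trans (commutator_lowerCentralSeries_le _ _)
      _ = (⊤ : Subgroup G).lowerCentralSeries (2 ^ (d + 1) - 1) := by
          have := Nat.one_le_two_pow (n := d)
          congr 1; rw [pow_succ]; omega

theorem le_lowerCentralSeries_of_succ_eq_commutator_top {N : ℕ → Subgroup G} {n₀ m : ℕ}
    (hN : ∀ k, n₀ ≤ k → N (k + 1) = ⁅N k, ⊤⁆) (h : N n₀ ≤ (⊤ : Subgroup G).lowerCentralSeries m) :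
    ∀ i, N (n₀ + i) ≤ (⊤ : Subgroup G).lowerCentralSeries (m + i) := by
  intro i
  induction i with
  | zero => exact h
  | succ i ih =>
    rw [← add_assoc, hN _ (Nat.le_add_right n₀ i), ← add_assoc, lowerCentralSeries_succ]
    exact commutator_mono ih le_top

end Subgroup

open Subgroup in
theorem filtration_strongly_central
    {G : Type*} [Group G] (d : ℕ)
    (N : ℕ → Subgroup G)
    (hN0 : N (2 ^ d) = derivedSeries G d)
    (hNsucc : ∀ k, 2 ^ d ≤ k → N (k + 1) = ⁅N k, (⊤ : Subgroup G)⁆) :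
    ∀ j k, 2 ^ d ≤ j → 2 ^ d ≤ k → ⁅N j, N k⁆ ≤ N (j + k) := by
  intro j k hj hk
  have : (N (2 ^ d)).Normal := hN0 ▸ derivedSeries_normal G d
  obtain ⟨i, rfl⟩ := Nat.exists_eq_add_of_le hk
  have hNk : N (2 ^ d + i) ≤ (⊤ : Subgroup G).lowerCentralSeries (2 ^ d - 1 + i) :=
    le_lowerCentralSeries_of_succ_eq_commutator_top hNsucc
      (hN0 ▸ derivedSeries_le_lowerCentralSeries_two_pow_sub_one d) i
  calc ⁅N j, N (2 ^ d + i)⁆ ≤ ⁅N j, (⊤ : Subgroup G).lowerCentralSeries (2 ^ d - 1 + i)⁆ :=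
        commutator_mono le_rfl hNk
    _ ≤ N (j + (2 ^ d - 1 + i) + 1) :=
        commutator_lowerCentralSeries_le_of_succ_eq_commutator_top hNsucc _ j hj
    _ = N (j + (2 ^ d + i)) := by
        have := Nat.one_le_two_pow (n := d)
        congr 1; omega
end

section
/- Let G be a finite p-group, d ≥ 1, with G^(d+1) ≠ 1 and |G^(d)/G^(d+1)| = p^{2^d+1}. Then G^(d)/[G^(d),G] is elementary abelian of rank at most 2, and N_{2^d+1} = G^(d) ∩ γ_{2^d+1}(G), where N_{2^d+1} = [G^(d), G]. -/
/-!
Write `H = G^(d)` and `N = [H, G]`. By the three subgroups lemma `[N_{2^d+k}, γ_{m+1}(G)]` lies in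
`N_{2^d+k+m+1}`, and `H ≤ γ_{2^d}(G)`, so `G^(d+1) = [H, H] ≤ N_{2^{d+1}}`. In a finite `p`-group
`[A, G] < A` whenever `A ≠ 1`, so every step `N_k > N_{k+1}` with `N_k ≠ 1` has index `≥ p`; hence
`G^(d+1) ≤ N_{2^d+n+1}` forces `p^n |H : N| ≤ |H : G^(d+1)| = p^(2^d+1)`; with `n = 2^d - 1` this
gives `|H : N| ≤ p^2`.

If `H / L` is cyclic then `[H, H] ≤ [L, H]`, which pushes `G^(d+1)` one step further down the
series. An `x ∈ H` with `x^p ∉ N` would make `H / N` cyclic of order `p^2`, and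
`N < H ∩ γ_{2^d+1}(G) = M` would make `H / M` cyclic; in each case the improved position of
`G^(d+1)` contradicts the index count.
-/

open QuotientGroup

namespace Subgroup

variable {G : Type*} [Group G]

/-- `A.commTopSeries n = [A, G, …, G]` (`n` copies of `G`); for `A = G^(d)` this is the paper's
`N_{2^d + n}`. -/
def commTopSeries (A : Subgroup G) : ℕ → Subgroup G
  | 0 => A
  | n + 1 => ⁅commTopSeries A n, ⊤⁆

variable (A : Subgroup G)

@[simp] lemma commTopSeries_zero : A.commTopSeries 0 = A := rfl

lemma commTopSeries_succ (n : ℕ) : A.commTopSeries (n + 1) = ⁅A.commTopSeries n, ⊤⁆ := rfl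

instance commTopSeries_normal [A.Normal] (n : ℕ) : (A.commTopSeries n).Normal := by
  induction n with
  | zero => assumption
  | succ n _ => rw [commTopSeries_succ]; infer_instance

lemma commTopSeries_antitone [A.Normal] : Antitone A.commTopSeries :=
  antitone_nat_of_succ_le fun _ => commutator_le_left _ _

lemma top_commTopSeries (n : ℕ) :
    (⊤ : Subgroup G).commTopSeries n = (⊤ : Subgroup G).lowerCentralSeries n := by
  induction n with
  | zero => rfl
  | succ n ih => rw [commTopSeries_succ, ih]; rfl

lemma commutator_commutator_le_of_rotate_s19 {A B C N : Subgroup G} [N.Normal]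
    (h₁ : ⁅⁅B, C⁆, A⁆ ≤ N) (h₂ : ⁅⁅C, A⁆, B⁆ ≤ N) : ⁅⁅A, B⁆, C⁆ ≤ N := by
  rw [← ker_mk' N, ← map_eq_bot_iff, map_commutator, map_commutator] at h₁ h₂ ⊢
  exact commutator_commutator_eq_bot_of_rotate h₁ h₂

lemma commutator_commTopSeries_lowerCentralSeries_le [A.Normal] (m k : ℕ) :
    ⁅A.commTopSeries k, (⊤ : Subgroup G).lowerCentralSeries m⁆ ≤
      A.commTopSeries (k + m + 1) := by
  induction m generalizing k with
  | zero => rfl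
  | succ m ih =>
    rw [lowerCentralSeries_succ, commutator_comm]
    refine commutator_commutator_le_of_rotate_s19 ?_ ?_
    · rw [commutator_comm ⊤, ← commTopSeries_succ]
      exact (ih (k + 1)).trans_eq (by congr 1; omega)
    · exact commutator_mono (ih k) le_rfl

lemma lowerCentralSeries_commutator_le (n m : ℕ) :
    ⁅(⊤ : Subgroup G).lowerCentralSeries n, (⊤ : Subgroup G).lowerCentralSeries m⁆ ≤
      (⊤ : Subgroup G).lowerCentralSeries (n + m + 1) := by
  simpa only [top_commTopSeries] using
    (⊤ : Subgroup G).commutator_commTopSeries_lowerCentralSeries_le m n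

lemma derivedSeries_le_lowerCentralSeries (n : ℕ) :
    derivedSeries G n ≤ (⊤ : Subgroup G).lowerCentralSeries (2 ^ n - 1) := by
  induction n with
  | zero => exact le_top
  | succ n ih =>
    rw [derivedSeries_succ]
    refine (commutator_mono ih ih).trans ((lowerCentralSeries_commutator_le _ _).trans_eq ?_)
    have := Nat.one_le_two_pow (n := n)
    congr 1
    omega

lemma commutator_commTopSeries_derivedSeries_le [A.Normal] (k d : ℕ) :
    ⁅A.commTopSeries k, derivedSeries G d⁆ ≤ A.commTopSeries (k + 2 ^ d) := by
  have := Nat.one_le_two_pow (n := d)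
  refine (commutator_mono le_rfl (derivedSeries_le_lowerCentralSeries d)).trans
    ((A.commutator_commTopSeries_lowerCentralSeries_le _ k).trans_eq ?_)
  congr 1
  omega

lemma derivedSeries_commutator_top_le_lowerCentralSeries (d : ℕ) :
    ⁅derivedSeries G d, (⊤ : Subgroup G)⁆ ≤ (⊤ : Subgroup G).lowerCentralSeries (2 ^ d) := by
  rw [commutator_comm]
  simpa only [commTopSeries_zero, zero_add, top_commTopSeries] using
    (⊤ : Subgroup G).commutator_commTopSeries_derivedSeries_le 0 d

lemma card_map_mk' (N H : Subgroup G) [N.Normal] : Nat.card (H.map (mk' N)) = N.relIndex H := by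
  rw [← relIndex_ker, ker_mk']

lemma le_centralizer_of_le_zpowers_sup {H L : Subgroup G} {x : G} (hx : x ∈ H)
    (hL : L ≤ centralizer H) (hH : H ≤ zpowers x ⊔ L) : H ≤ centralizer H := by
  have hxL : zpowers x ≤ centralizer L :=
    zpowers_le.mpr ((le_centralizer_iff.mp hL) hx)
  have hHx : H ≤ centralizer (zpowers x) :=
    hH.trans (sup_le (le_centralizer _) (le_centralizer_iff.mp hxL))
  exact hH.trans (sup_le (le_centralizer_iff.mp hHx) hL)

lemma exists_le_zpowers_sup_of_isCyclic {N H : Subgroup G} [N.Normal]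
    [IsCyclic (H.map (mk' N))] : ∃ x ∈ H, H ≤ zpowers x ⊔ N := by
  obtain ⟨⟨_, x, hx, rfl⟩, hgen⟩ := IsCyclic.exists_generator (α := H.map (mk' N))
  refine ⟨x, hx, fun h hh => ?_⟩
  obtain ⟨k, hk⟩ := hgen ⟨mk' N h, mem_map_of_mem _ hh⟩
  rw [← ker_mk' N, ← comap_map_eq, mem_comap, MonoidHom.map_zpowers]
  exact ⟨k, congrArg Subtype.val hk⟩

lemma isCyclic_map_mk'_of_relIndex_dvd_prime {p : ℕ} [Fact p.Prime] {N H : Subgroup G}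
    [N.Normal] (h : N.relIndex H ∣ p) : IsCyclic (H.map (mk' N)) :=
  isCyclic_of_card_dvd_prime (p := p) (by rwa [card_map_mk'])

/-- Modulo `[L, H]` the image of `H` is generated by one element over the central image of `L`,
hence abelian. -/
lemma commutator_le_of_isCyclic {L H : Subgroup G} [L.Normal] [H.Normal]
    [IsCyclic (H.map (mk' L))] : ⁅H, H⁆ ≤ ⁅L, H⁆ := by
  obtain ⟨x, hx, hcov⟩ := exists_le_zpowers_sup_of_isCyclic (N := L) (H := H)
  set π := mk' ⁅L, H⁆
  have hL : L.map π ≤ centralizer (H.map π) := by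
    rw [← commutator_eq_bot_iff_le_centralizer, ← map_commutator, map_eq_bot_iff, ker_mk']
  have hH : H.map π ≤ zpowers (π x) ⊔ L.map π := by
    rw [← MonoidHom.map_zpowers, ← map_sup]
    exact map_mono hcov
  have := le_centralizer_of_le_zpowers_sup (mem_map_of_mem π hx) hL hH
  rwa [← commutator_eq_bot_iff_le_centralizer, ← map_commutator, map_eq_bot_iff, ker_mk'] at this

end Subgroup

namespace IsPGroup

open Subgroup

variable {p : ℕ} [hp : Fact p.Prime] {G : Type*} [Group G] [Finite G]

lemma exists_relIndex_eq_pow (hG : IsPGroup p G) (H K : Subgroup G) :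
    ∃ n, H.relIndex K = p ^ n :=
  (hG.to_subgroup K).index (H.subgroupOf K)

lemma relIndex_dvd_of_le (hG : IsPGroup p G) {H K : Subgroup G}
    (h : H.relIndex K ≤ p) : H.relIndex K ∣ p := by
  obtain ⟨n, hn⟩ := hG.exists_relIndex_eq_pow H K
  rw [hn] at h ⊢
  have hn1 : n ≤ 1 := (Nat.pow_le_pow_iff_right hp.out.one_lt).mp (h.trans_eq (pow_one p).symm)
  simpa using pow_dvd_pow p hn1

lemma prime_le_relIndex (hG : IsPGroup p G) {H K : Subgroup G} (h : ¬ K ≤ H) :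
    p ≤ H.relIndex K := by
  obtain ⟨n, hn⟩ := hG.exists_relIndex_eq_pow H K
  rcases n with _ | n
  · exact absurd (relIndex_eq_one.mp hn) h
  · exact hn ▸ Nat.le_self_pow n.succ_ne_zero p

lemma not_le_commutator_top (hG : IsPGroup p G) {A : Subgroup G} (hA : A ≠ ⊥) :
    ¬ A ≤ ⁅A, ⊤⁆ := by
  intro h
  obtain ⟨n, hn⟩ := Subgroup.nilpotent_iff_lowerCentralSeries.mp hG.isNilpotent
  have hle : ∀ m, A ≤ (⊤ : Subgroup G).lowerCentralSeries m := fun m => by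
    induction m with
    | zero => exact le_top
    | succ m ih => exact h.trans (commutator_mono ih le_rfl)
  exact hA (le_bot_iff.mp (hn ▸ hle n))

lemma pow_mul_relIndex_le (hG : IsPGroup p G) {A : Subgroup G} [A.Normal] {n : ℕ}
    (hA : A.commTopSeries n ≠ ⊥) :
    p ^ n * ⁅A, (⊤ : Subgroup G)⁆.relIndex A ≤ (A.commTopSeries (n + 1)).relIndex A := by
  induction n with
  | zero => simp [commTopSeries_succ]
  | succ n ih =>
    have hn : A.commTopSeries n ≠ ⊥ := ne_bot_of_le_ne_bot hA (A.commTopSeries_antitone n.le_succ)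
    have hstep : p ≤ (A.commTopSeries (n + 2)).relIndex (A.commTopSeries (n + 1)) :=
      hG.prime_le_relIndex (hG.not_le_commutator_top hA)
    rw [pow_succ', mul_assoc]
    calc p * (p ^ n * _)
      _ ≤ (A.commTopSeries (n + 2)).relIndex (A.commTopSeries (n + 1)) *
          (A.commTopSeries (n + 1)).relIndex A := Nat.mul_le_mul hstep (ih hn)
      _ = (A.commTopSeries (n + 2)).relIndex A :=
        relIndex_mul_relIndex _ _ _ (A.commTopSeries_antitone (n + 1).le_succ)
          (A.commTopSeries_antitone (Nat.zero_le _))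

lemma pow_mul_relIndex_le_of_le_commTopSeries (hG : IsPGroup p G) {A B : Subgroup G} [A.Normal]
    {n : ℕ} (hB : B ≠ ⊥) (hBA : B ≤ A.commTopSeries (n + 1)) :
    p ^ n * ⁅A, (⊤ : Subgroup G)⁆.relIndex A ≤ B.relIndex A :=
  (hG.pow_mul_relIndex_le (ne_bot_of_le_ne_bot hB (hBA.trans
    (A.commTopSeries_antitone n.le_succ)))).trans
    (relIndex_le_of_le_left hBA index_ne_zero_of_finite)

end IsPGroup

section DerivedSeries

open Subgroup

variable {p : ℕ} [hp : Fact p.Prime] {G : Type*} [Group G] [Finite G] {d : ℕ}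

lemma relIndex_commutator_top_le_of_le_commTopSeries (hG : IsPGroup p G)
    (hne : derivedSeries G (d + 1) ≠ ⊥)
    (hsmall : (derivedSeries G (d + 1)).relIndex (derivedSeries G d) = p ^ (2 ^ d + 1))
    {n k : ℕ} (hnk : n + k = 2 ^ d + 1)
    (h : ⁅derivedSeries G d, derivedSeries G d⁆ ≤ (derivedSeries G d).commTopSeries (n + 1)) :
    ⁅derivedSeries G d, (⊤ : Subgroup G)⁆.relIndex (derivedSeries G d) ≤ p ^ k := by
  rw [← derivedSeries_succ] at h
  have := hG.pow_mul_relIndex_le_of_le_commTopSeries hne h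
  rw [hsmall, ← hnk, pow_add] at this
  exact Nat.le_of_mul_le_mul_left this (pow_pos hp.out.pos n)

lemma relIndex_commutator_top_le_of_isCyclic (hG : IsPGroup p G)
    (hne : derivedSeries G (d + 1) ≠ ⊥)
    (hsmall : (derivedSeries G (d + 1)).relIndex (derivedSeries G d) = p ^ (2 ^ d + 1))
    (L : Subgroup G) [L.Normal] [IsCyclic ((derivedSeries G d).map (mk' L))]
    {n k : ℕ} (hnk : n + k = 2 ^ d + 1)
    (hL : ⁅L, derivedSeries G d⁆ ≤ (derivedSeries G d).commTopSeries (n + 1)) :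
    ⁅derivedSeries G d, (⊤ : Subgroup G)⁆.relIndex (derivedSeries G d) ≤ p ^ k :=
  relIndex_commutator_top_le_of_le_commTopSeries hG hne hsmall hnk
    (commutator_le_of_isCyclic.trans hL)

lemma relIndex_derivedSeries_commutator_top_le_sq (hG : IsPGroup p G)
    (hne : derivedSeries G (d + 1) ≠ ⊥)
    (hsmall : (derivedSeries G (d + 1)).relIndex (derivedSeries G d) = p ^ (2 ^ d + 1)) :
    ⁅derivedSeries G d, (⊤ : Subgroup G)⁆.relIndex (derivedSeries G d) ≤ p ^ 2 := by
  have := Nat.one_le_two_pow (n := d)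
  refine relIndex_commutator_top_le_of_le_commTopSeries hG hne hsmall (n := 2 ^ d - 1)
    (by omega) (((derivedSeries G d).commutator_commTopSeries_derivedSeries_le 0 d).trans_eq ?_)
  congr 1
  omega

lemma pow_mem_derivedSeries_commutator_top (hG : IsPGroup p G)
    (hne : derivedSeries G (d + 1) ≠ ⊥)
    (hsmall : (derivedSeries G (d + 1)).relIndex (derivedSeries G d) = p ^ (2 ^ d + 1))
    {x : G} (hx : x ∈ derivedSeries G d) :
    x ^ p ∈ ⁅derivedSeries G d, (⊤ : Subgroup G)⁆ := by
  set H := derivedSeries G d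
  set N := ⁅H, (⊤ : Subgroup G)⁆
  by_contra hxp
  obtain ⟨k, hk⟩ := (IsPGroup.iff_orderOf.mp (hG.to_quotient N)) (mk' N x)
  have hk2 : 2 ≤ k := by
    by_contra! hk1
    refine hxp ((eq_one_iff _).mp ?_)
    change mk' N x ^ p = 1
    rw [← orderOf_dvd_iff_pow_eq_one, hk]
    simpa using pow_dvd_pow p (Nat.le_of_lt_succ hk1)
  have : IsCyclic (H.map (mk' N)) :=
    isCyclic_of_card_le_orderOf ⟨mk' N x, mem_map_of_mem _ hx⟩ <| by
      rw [orderOf_mk, hk, card_map_mk']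
      exact (relIndex_derivedSeries_commutator_top_le_sq hG hne hsmall).trans
        (Nat.pow_le_pow_right hp.out.pos hk2)
  have hNp : N.relIndex H ≤ p ^ 1 :=
    relIndex_commutator_top_le_of_isCyclic hG hne hsmall N rfl
      ((H.commutator_commTopSeries_derivedSeries_le 1 d).trans_eq (by rw [add_comm]))
  have hdvd : p ^ k ∣ N.relIndex H := by
    rw [← hk, ← card_map_mk']
    exact (H.map (mk' N)).orderOf_dvd_natCard (mem_map_of_mem _ hx)
  have := (Nat.pow_le_pow_iff_right hp.out.one_lt).mp
    ((Nat.le_of_dvd (Nat.pos_of_ne_zero index_ne_zero_of_finite) hdvd).trans hNp)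
  omega

lemma le_lowerCentralSeries_of_not_inf_le_commutator_top (hG : IsPGroup p G)
    (hne : derivedSeries G (d + 1) ≠ ⊥)
    (hsmall : (derivedSeries G (d + 1)).relIndex (derivedSeries G d) = p ^ (2 ^ d + 1))
    (hMN : ¬ derivedSeries G d ⊓ (⊤ : Subgroup G).lowerCentralSeries (2 ^ d) ≤
      ⁅derivedSeries G d, (⊤ : Subgroup G)⁆) :
    derivedSeries G d ≤ (⊤ : Subgroup G).lowerCentralSeries (2 ^ d) ∧
      ⁅derivedSeries G d, (⊤ : Subgroup G)⁆.relIndex (derivedSeries G d) ≤ p := by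
  set H := derivedSeries G d
  set M := H ⊓ (⊤ : Subgroup G).lowerCentralSeries (2 ^ d)
  set N := ⁅H, (⊤ : Subgroup G)⁆
  have hsplit : N.relIndex M * M.relIndex H = N.relIndex H :=
    relIndex_mul_relIndex _ _ _
      (le_inf (commutator_le_left _ _) (derivedSeries_commutator_top_le_lowerCentralSeries d))
      inf_le_left
  have hpM : p * M.relIndex H ≤ N.relIndex H :=
    hsplit ▸ Nat.mul_le_mul_right _ (hG.prime_le_relIndex hMN)
  have hMp : M.relIndex H ≤ p := by
    have := hpM.trans (relIndex_derivedSeries_commutator_top_le_sq hG hne hsmall)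
    rw [sq] at this
    exact Nat.le_of_mul_le_mul_left this hp.out.pos
  have := isCyclic_map_mk'_of_relIndex_dvd_prime (hG.relIndex_dvd_of_le hMp)
  have hNp : N.relIndex H ≤ p ^ 1 :=
    relIndex_commutator_top_le_of_isCyclic hG hne hsmall M rfl <|
      (commutator_comm M H).trans_le <| (commutator_mono le_rfl inf_le_right).trans <|
        (H.commutator_commTopSeries_lowerCentralSeries_le (2 ^ d) 0).trans_eq (by rw [zero_add])
  rw [pow_one] at hNp
  have hHM : M.relIndex H = 1 := by
    have := Nat.le_of_mul_le_mul_left ((hpM.trans hNp).trans_eq (mul_one p).symm) hp.out.pos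
    exact le_antisymm this (Nat.pos_of_ne_zero index_ne_zero_of_finite)
  exact ⟨(relIndex_eq_one.mp hHM).trans inf_le_right, hNp⟩

lemma derivedSeries_le_commutator_top_of_le_lowerCentralSeries (hG : IsPGroup p G)
    (hne : derivedSeries G (d + 1) ≠ ⊥)
    (hsmall : (derivedSeries G (d + 1)).relIndex (derivedSeries G d) = p ^ (2 ^ d + 1))
    (hle : derivedSeries G d ≤ (⊤ : Subgroup G).lowerCentralSeries (2 ^ d))
    (hNp : ⁅derivedSeries G d, (⊤ : Subgroup G)⁆.relIndex (derivedSeries G d) ≤ p) :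
    derivedSeries G d ≤ ⁅derivedSeries G d, (⊤ : Subgroup G)⁆ := by
  set H := derivedSeries G d
  set N := ⁅H, (⊤ : Subgroup G)⁆
  have := isCyclic_map_mk'_of_relIndex_dvd_prime (hG.relIndex_dvd_of_le hNp)
  have hN1 : N.relIndex H ≤ p ^ 0 :=
    relIndex_commutator_top_le_of_isCyclic hG hne hsmall N (n := 2 ^ d + 1) rfl <|
      (commutator_mono le_rfl hle).trans <|
        (H.commutator_commTopSeries_lowerCentralSeries_le (2 ^ d) 1).trans_eq (by rw [add_comm 1])
  exact relIndex_eq_one.mp (le_antisymm hN1 (Nat.pos_of_ne_zero index_ne_zero_of_finite))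

lemma derivedSeries_commutator_top_eq_inf (hG : IsPGroup p G)
    (hne : derivedSeries G (d + 1) ≠ ⊥)
    (hsmall : (derivedSeries G (d + 1)).relIndex (derivedSeries G d) = p ^ (2 ^ d + 1)) :
    ⁅derivedSeries G d, (⊤ : Subgroup G)⁆ =
      derivedSeries G d ⊓ (⊤ : Subgroup G).lowerCentralSeries (2 ^ d) := by
  refine le_antisymm
    (le_inf (commutator_le_left _ _) (derivedSeries_commutator_top_le_lowerCentralSeries d)) ?_
  by_contra hMN
  obtain ⟨hle, hNp⟩ := le_lowerCentralSeries_of_not_inf_le_commutator_top hG hne hsmall hMN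
  exact hMN (inf_le_left.trans
    (derivedSeries_le_commutator_top_of_le_lowerCentralSeries hG hne hsmall hle hNp))

end DerivedSeries

theorem small_derived_quotient_structure_general
    {p : ℕ} [Fact p.Prime]
    {G : Type*} [Group G] [Finite G] (hG : IsPGroup p G)
    (d : ℕ)
    (hne : derivedSeries G (d + 1) ≠ ⊥)
    (hsmall : (derivedSeries G (d + 1)).relIndex (derivedSeries G d) = p ^ (2 ^ d + 1)) :
    ⁅derivedSeries G d, derivedSeries G d⁆ ≤ ⁅derivedSeries G d, (⊤ : Subgroup G)⁆ ∧
    (∀ x ∈ derivedSeries G d, x ^ p ∈ ⁅derivedSeries G d, (⊤ : Subgroup G)⁆) ∧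
    (⁅derivedSeries G d, (⊤ : Subgroup G)⁆).relIndex (derivedSeries G d) ≤ p ^ 2 ∧
    ⁅derivedSeries G d, (⊤ : Subgroup G)⁆ =
      derivedSeries G d ⊓ (⊤ : Subgroup G).lowerCentralSeries (2 ^ d) :=
  ⟨Subgroup.commutator_mono le_rfl le_top,
    fun _ hx => pow_mem_derivedSeries_commutator_top hG hne hsmall hx,
    relIndex_derivedSeries_commutator_top_le_sq hG hne hsmall,
    derivedSeries_commutator_top_eq_inf hG hne hsmall⟩

theorem small_derived_quotient_structure
    {p : ℕ} [Fact p.Prime]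
    {G : Type*} [Group G] [Finite G] (hG : IsPGroup p G)
    (d : ℕ) (hd : 1 ≤ d)
    (hne : derivedSeries G (d + 1) ≠ ⊥)
    (hsmall : (derivedSeries G (d + 1)).relIndex (derivedSeries G d) = p ^ (2 ^ d + 1)) :
    ⁅derivedSeries G d, derivedSeries G d⁆ ≤ ⁅derivedSeries G d, (⊤ : Subgroup G)⁆ ∧
    (∀ x ∈ derivedSeries G d, x ^ p ∈ ⁅derivedSeries G d, (⊤ : Subgroup G)⁆) ∧
    (⁅derivedSeries G d, (⊤ : Subgroup G)⁆).relIndex (derivedSeries G d) ≤ p ^ 2 ∧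
    ⁅derivedSeries G d, (⊤ : Subgroup G)⁆ =
      derivedSeries G d ⊓ (⊤ : Subgroup G).lowerCentralSeries (2 ^ d) :=
  small_derived_quotient_structure_general hG d hne hsmall
end
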